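/- arXiv:1111.2154 — 3 statements merged into one kernel-verified Lean document; each statement's English description precedes it below -/
import Mathlib

section
/- For every n ∈ ℤ there exist smooth functions f₁, f₂ : ℝ² → ℂ such that f_i(x, y+1) = f_i(x,y) and f_i(x+1, y) = e(−cn(y − nν))·f_i(x,y) for all (x,y) and i ∈ {1,2}, and |f₁(x,y)|² + |f₂(x,y)|² = 1 for all (x,y) ∈ ℝ². Consequently, the elements ξ₁, ξ₂ ∈ D₀ defined by ξ_i(p,x,y) = δ_{p,n}·f_i(x,y) form a frame of two elements for the degree-n part of D₀: ξ₁*·ξ₁ + ξ₂*·ξ₂ = 1 and ξ₁·ξ₁* + ξ₂·ξ₂* = 1, where 1 ∈ D₀ is the unit given by 1(p,x,y) = δ_{p,0}. -/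
/-- `e x = exp(2πix)`. -/
noncomputable def e (x : ℝ) : ℂ := Complex.exp (2 * Real.pi * Complex.I * x)

/-- Membership in the algebra `D₀` underlying the Quantum Heisenberg Manifold:
(a) continuity and boundedness in `(x,y)` for every `p`; (b) periodicity in `y`;
(c) finite support in `p`; (d) the twisted periodicity condition in `x`. -/
structure MemD0 (c : ℕ) (ν : ℝ) (F : ℤ → ℝ → ℝ → ℂ) : Prop where
  continuous : ∀ p : ℤ, Continuous fun xy : ℝ × ℝ => F p xy.1 xy.2
  bounded : ∀ p : ℤ, ∃ M : ℝ, ∀ x y : ℝ, ‖F p x y‖ ≤ M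
  periodic : ∀ (p : ℤ) (x y : ℝ), F p x (y + 1) = F p x y
  finiteSupport : (Function.support F).Finite
  twisted : ∀ (p : ℤ) (x y : ℝ),
    F p (x + 1) y = e (-((c : ℝ) * (p : ℝ) * (y - (p : ℝ) * ν))) * F p x y

/-- The product of the Quantum Heisenberg Manifold algebra:
`(F₁·F₂)(p,x,y) = Σ_q F₁(q,x,y)·F₂(p−q, x−2qμ, y−2qν)` (a finite sum). -/
noncomputable def qprod (μ ν : ℝ) (F₁ F₂ : ℤ → ℝ → ℝ → ℂ) : ℤ → ℝ → ℝ → ℂ :=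
  fun p x y => ∑ᶠ q : ℤ, F₁ q x y * F₂ (p - q) (x - 2 * (q : ℝ) * μ) (y - 2 * (q : ℝ) * ν)


/-- The involution of the QHM algebra: `F*(p,x,y) = conj(F(−p, x−2pμ, y−2pν))`. -/
noncomputable def qstar (μ ν : ℝ) (F : ℤ → ℝ → ℝ → ℂ) : ℤ → ℝ → ℝ → ℂ :=
  fun p x y =>
    (starRingEnd ℂ) (F (-p) (x - 2 * (p : ℝ) * μ) (y - 2 * (p : ℝ) * ν))

/-- The element of `D₀` concentrated in degree `n`, `ξ(p,x,y) = δ_{p,n}·f(x,y)`. -/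
noncomputable def diracAt (n : ℤ) (f : ℝ → ℝ → ℂ) : ℤ → ℝ → ℝ → ℂ :=
  fun p x y => if p = n then f x y else 0

/-- The unit of `D₀`: `1(p,x,y) = δ_{p,0}`. -/
noncomputable def oneD : ℤ → ℝ → ℝ → ℂ :=
  fun p _ _ => if p = 0 then 1 else 0

open Complex

lemma I_im_pos : (0:ℝ) < Complex.I.im := by simp

/-- θ(z) := jacobiTheta₂ z I is 1-periodic, for any integer shift. -/
lemma theta_add_int (z : ℂ) (k : ℤ) :
    jacobiTheta₂ (z + (k : ℂ)) Complex.I = jacobiTheta₂ z Complex.I := by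
  induction k using Int.induction_on with
  | zero => simp
  | succ k ih =>
      have h := jacobiTheta₂_add_left (z + (k : ℂ)) Complex.I
      push_cast at ih ⊢
      rw [show z + ((k : ℂ) + 1) = z + (k : ℂ) + 1 by ring, h, ih]
  | pred k ih =>
      have h := jacobiTheta₂_add_left (z + (-(k : ℂ) - 1)) Complex.I
      push_cast at ih ⊢
      have h2 : jacobiTheta₂ (z + (-(k : ℂ) - 1)) Complex.I
          = jacobiTheta₂ (z + -(k : ℂ)) Complex.I := by
        rw [← h]; congr 1; ring
      exact h2.trans ih

/-- Quasi-periodicity downward: θ(z − I) = exp(π + 2πiz)·θ(z). -/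
lemma theta_sub_I (z : ℂ) :
    jacobiTheta₂ (z - Complex.I) Complex.I
      = Complex.exp ((Real.pi : ℂ) + 2 * Real.pi * Complex.I * z) * jacobiTheta₂ z Complex.I := by
  have h := jacobiTheta₂_add_left' (z - Complex.I) Complex.I
  rw [sub_add_cancel] at h
  rw [h, ← mul_assoc, ← Complex.exp_add]
  have : ((Real.pi : ℂ) + 2 * Real.pi * Complex.I * z) +
      (-(Real.pi : ℂ) * Complex.I * (Complex.I + 2 * (z - Complex.I))) = 0 := by
    have hI : Complex.I ^ 2 = -1 := Complex.I_sq
    ring_nf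
    rw [Complex.I_sq]
    ring
  rw [this, Complex.exp_zero, one_mul]

lemma exp_pi_half_bound : Real.exp (-(Real.pi/2)) ≤ 8/27 := by
  have h1 : (3:ℝ)/2 ≤ Real.pi / 2 := by
    have := Real.pi_gt_three
    linarith
  have h2 : Real.exp (-(Real.pi/2)) ≤ Real.exp (-(3/2)) := by
    apply Real.exp_le_exp.2; linarith
  have h3 : (3:ℝ)/2 = (1/2) + (1/2) + (1/2) := by norm_num
  have h4 : Real.exp ((3:ℝ)/2) = Real.exp (1/2) * Real.exp (1/2) * Real.exp (1/2) := by
    rw [h3, Real.exp_add, Real.exp_add]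
  have h5 : (3:ℝ)/2 ≤ Real.exp (1/2) := by
    have := Real.add_one_le_exp (1/2 : ℝ); linarith
  have h6 : (27:ℝ)/8 ≤ Real.exp (3/2) := by
    rw [h4]
    have e2 : (0:ℝ) < Real.exp (1/2) := Real.exp_pos _
    nlinarith
  have h7 : Real.exp (-(3/2 : ℝ)) ≤ 8/27 := by
    rw [Real.exp_neg]
    rw [inv_le_comm₀ (Real.exp_pos _) (by norm_num)]
    linarith
  linarith

lemma theta_ne_zero {z : ℂ} (hz : |z.im| ≤ 1/4) : jacobiTheta₂ z Complex.I ≠ 0 := by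
  set r : ℝ := Real.exp (-(Real.pi/2)) with hr_def
  have hr_pos : 0 < r := Real.exp_pos _
  have hr_le : r ≤ 8/27 := exp_pi_half_bound
  have hr_lt1 : r < 1 := lt_of_le_of_lt hr_le (by norm_num)
  set b : ℤ → ℝ := fun n => if n = 0 then 0 else r ^ n.natAbs with hb_def
  -- geometric sums
  have hgeo : HasSum (fun k : ℕ => r ^ (k + 1)) (r * (1 - r)⁻¹) := by
    have h := hasSum_geometric_of_lt_one hr_pos.le hr_lt1
    have := h.mul_left r
    simpa [pow_succ, mul_comm] using this
  have heq1 : (fun k : ℕ => b ((k : ℤ) + 1)) = fun k : ℕ => r ^ (k + 1) := by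
    funext k
    have h1 : ((k : ℤ) + 1) ≠ 0 := by omega
    have h2 : ((k : ℤ) + 1).natAbs = k + 1 := by omega
    simp only [hb_def, if_neg h1, h2]
  have heq2 : (fun k : ℕ => b (-((k : ℤ) + 1))) = fun k : ℕ => r ^ (k + 1) := by
    funext k
    have h1 : (-((k : ℤ) + 1)) ≠ 0 := by omega
    have h2 : (-((k : ℤ) + 1)).natAbs = k + 1 := by omega
    simp only [hb_def, if_neg h1, h2]
  have hb0 : b 0 = 0 := by simp [hb_def]
  have hb : HasSum b (r * (1 - r)⁻¹ + 0 + r * (1 - r)⁻¹) := by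
    refine HasSum.of_add_one_of_neg_add_one ?_ ?_
    · rw [show (fun k : ℕ => b ((k : ℕ) + 1)) = fun k : ℕ => b ((k : ℤ) + 1) from rfl,
        heq1]
      simpa [hb0] using hgeo
    · rw [heq2]; exact hgeo
  have hSlt : r * (1 - r)⁻¹ + 0 + r * (1 - r)⁻¹ < 1 := by
    have h1 : (0:ℝ) < 1 - r := by linarith
    have h2 : (1 - r) * (1 - r)⁻¹ = 1 := mul_inv_cancel₀ h1.ne'
    have h3 : (0:ℝ) < (1 - r)⁻¹ := inv_pos.2 h1
    nlinarith
  -- the terms of the theta series minus its 0th term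
  set t : ℤ → ℂ := fun n => jacobiTheta₂_term n z Complex.I - (if n = 0 then 1 else 0)
    with ht_def
  have hsum : HasSum t (jacobiTheta₂ z Complex.I - 1) :=
    (hasSum_jacobiTheta₂_term z I_im_pos).sub (hasSum_ite_eq 0 1)
  have hbound : ∀ n : ℤ, ‖t n‖ ≤ b n := by
    intro n
    rcases eq_or_ne n 0 with rfl | hn
    · simp [ht_def, hb_def, jacobiTheta₂_term]
    · have h1 : ‖t n‖ = ‖jacobiTheta₂_term n z Complex.I‖ := by
        simp [ht_def, if_neg hn]
      rw [h1, norm_jacobiTheta₂_term, Complex.I_im]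
      simp only [hb_def, if_neg hn]
      have hna : ((n.natAbs : ℕ) : ℝ) = |(n : ℝ)| := by
        rw [Nat.cast_natAbs]; push_cast; ring_nf
      have hrpow : r ^ n.natAbs = Real.exp ((n.natAbs : ℝ) * (-(Real.pi/2))) := by
        rw [hr_def, ← Real.exp_nat_mul]
      rw [hrpow, Real.exp_le_exp, hna]
      have ha1 : (1:ℝ) ≤ |(n:ℝ)| := by
        rw [← Int.cast_abs]; exact_mod_cast Int.one_le_abs hn
      have ha2 : (n:ℝ)^2 = |(n:ℝ)|^2 := (_root_.sq_abs _).symm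
      have hzim : -2 * Real.pi * (n:ℝ) * z.im ≤ 2 * Real.pi * |(n:ℝ)| * (1/4) := by
        have : |(-2 * Real.pi * (n:ℝ)) * z.im| ≤ |(-2) * Real.pi * (n:ℝ)| * (1/4) := by
          rw [abs_mul]
          apply mul_le_mul_of_nonneg_left hz (abs_nonneg _)
        have h2 : |(-2) * Real.pi * (n:ℝ)| = 2 * Real.pi * |(n:ℝ)| := by
          rw [abs_mul, abs_mul]
          simp [_root_.abs_of_nonneg Real.pi_pos.le]
        calc -2 * Real.pi * (n:ℝ) * z.im ≤ |(-2 * Real.pi * (n:ℝ)) * z.im| := le_abs_self _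
          _ ≤ |(-2) * Real.pi * (n:ℝ)| * (1/4) := this
          _ = 2 * Real.pi * |(n:ℝ)| * (1/4) := by rw [h2]
      have hpi : (0:ℝ) < Real.pi := Real.pi_pos
      nlinarith [sq_nonneg (|(n:ℝ)| - 1)]
  have hsummable_norm : Summable fun n : ℤ => ‖t n‖ :=
    Summable.of_nonneg_of_le (fun n => norm_nonneg _) hbound hb.summable
  have hle : ‖jacobiTheta₂ z Complex.I - 1‖ < 1 := by
    calc ‖jacobiTheta₂ z Complex.I - 1‖ = ‖∑' n : ℤ, t n‖ := by rw [hsum.tsum_eq]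
      _ ≤ ∑' n : ℤ, ‖t n‖ := norm_tsum_le_tsum_norm hsummable_norm
      _ ≤ ∑' n : ℤ, b n := Summable.tsum_le_tsum hbound hsummable_norm hb.summable
      _ = r * (1 - r)⁻¹ + 0 + r * (1 - r)⁻¹ := hb.tsum_eq
      _ < 1 := hSlt
  intro h0
  rw [h0] at hle
  simp at hle

lemma e_add (a b : ℝ) : e (a + b) = e a * e b := by
  rw [e, e, e, ← Complex.exp_add]; congr 1; push_cast; ring

lemma e_int (k : ℤ) : e (k : ℝ) = 1 := by
  rw [e, show (2 * (Real.pi : ℂ) * Complex.I * ((k : ℝ) : ℂ))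
      = (k : ℂ) * (2 * Real.pi * Complex.I) by push_cast; ring]
  exact Complex.exp_int_mul_two_pi_mul_I k

lemma norm_e (t : ℝ) : ‖e t‖ = 1 := by
  rw [e, show (2 * (Real.pi : ℂ) * Complex.I * ((t : ℝ) : ℂ))
      = ((2 * Real.pi * t : ℝ) : ℂ) * Complex.I by push_cast; ring,
    Complex.norm_exp_ofReal_mul_I]

lemma abs_e (t : ℝ) : ‖e t‖ = 1 := by exact norm_e t

lemma e_mul_conj (t : ℝ) : e t * (starRingEnd ℂ) (e t) = 1 := by
  rw [Complex.mul_conj]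
  rw [show Complex.normSq (e t) = ‖e t‖ ^ 2 from (Complex.sq_norm _).symm, abs_e]
  norm_num

/-- The raw (un-normalised) theta section. -/
noncomputable def G (δ : ℝ) (m : ℤ) (x y : ℝ) : ℂ :=
  Complex.exp (-(Real.pi : ℂ) * (x : ℂ) ^ 2) *
    jacobiTheta₂ (((-(m : ℝ) * (y - δ) : ℝ) : ℂ) - Complex.I * (x : ℂ)) Complex.I

lemma G_twisted (δ : ℝ) (m : ℤ) (x y : ℝ) :
    G δ m (x + 1) y = e (-(m : ℝ) * (y - δ)) * G δ m x y := by
  have hz : ((-(m : ℝ) * (y - δ) : ℝ) : ℂ) - Complex.I * ((x + 1 : ℝ) : ℂ)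
      = ((((-(m : ℝ) * (y - δ) : ℝ)) : ℂ) - Complex.I * (x : ℂ)) - Complex.I := by
    push_cast; ring
  rw [G, hz, theta_sub_I, G, e, ← mul_assoc, ← Complex.exp_add, ← mul_assoc, ← Complex.exp_add]
  congr 2
  push_cast
  linear_combination (-2 * (Real.pi : ℂ) * (x : ℂ)) * Complex.I_sq

lemma G_periodic (δ : ℝ) (m : ℤ) (x y : ℝ) : G δ m x (y + 1) = G δ m x y := by
  have hz : ((-(m : ℝ) * (y + 1 - δ) : ℝ) : ℂ) - Complex.I * (x : ℂ)
      = ((((-(m : ℝ) * (y - δ) : ℝ)) : ℂ) - Complex.I * (x : ℂ)) + ((-m : ℤ) : ℂ) := by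
    push_cast; ring
  rw [G, hz, theta_add_int, G]

lemma G_norm_add_one (δ : ℝ) (m : ℤ) (x y : ℝ) : ‖G δ m (x + 1) y‖ = ‖G δ m x y‖ := by
  rw [G_twisted, norm_mul, norm_e, one_mul]

lemma G_norm_add_int (δ : ℝ) (m : ℤ) (x y : ℝ) (k : ℤ) :
    ‖G δ m (x + k) y‖ = ‖G δ m x y‖ := by
  induction k using Int.induction_on with
  | zero => norm_num
  | succ k ih =>
      have h := G_norm_add_one δ m (x + (k : ℝ)) y
      push_cast at ih ⊢
      rw [show x + ((k : ℝ) + 1) = x + (k : ℝ) + 1 by ring, h, ih]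
  | pred k ih =>
      have h := G_norm_add_one δ m (x + (-(k : ℝ) - 1)) y
      push_cast at ih ⊢
      rw [show x + (-(k : ℝ) - 1) + 1 = x + -(k : ℝ) by ring] at h
      rw [show x + (-(k : ℝ) - 1) = x + (-(k : ℝ) - 1) by ring]
      exact h.symm.trans ih

lemma G_ne_zero (δ : ℝ) (m : ℤ) {x : ℝ} (y : ℝ) (hx : |x| ≤ 1/4) : G δ m x y ≠ 0 := by
  apply mul_ne_zero (Complex.exp_ne_zero _)
  apply theta_ne_zero
  have him : ((((-(m : ℝ) * (y - δ) : ℝ)) : ℂ) - Complex.I * (x : ℂ)).im = -x := by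
    simp
  rw [him, abs_neg]
  exact hx

lemma analyticAt_ofReal' {f : ℝ × ℝ → ℝ} {z : ℝ × ℝ} (hf : AnalyticAt ℝ f z) :
    AnalyticAt ℝ (fun p => ((f p : ℝ) : ℂ)) z :=
  (Complex.ofRealCLM.analyticAt _).comp hf

lemma analyticAt_conj' {f : ℝ × ℝ → ℂ} {z : ℝ × ℝ} (hf : AnalyticAt ℝ f z) :
    AnalyticAt ℝ (fun p => (starRingEnd ℂ) (f p)) z :=
  (Complex.conjCLE.toContinuousLinearMap.analyticAt _).comp hf

lemma theta_analyticAt (w : ℂ) : AnalyticAt ℂ (fun z => jacobiTheta₂ z Complex.I) w := by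
  have hd : Differentiable ℂ (fun z => jacobiTheta₂ z Complex.I) :=
    fun z => differentiableAt_jacobiTheta₂_fst z I_im_pos
  exact hd.analyticAt w

lemma G_shift_analyticAt (δ : ℝ) (m : ℤ) (a : ℝ) (z : ℝ × ℝ) :
    AnalyticAt ℝ (fun p : ℝ × ℝ => G δ m (p.1 - a) p.2) z := by
  have hx : AnalyticAt ℝ (fun p : ℝ × ℝ => p.1 - a) z := analyticAt_fst.sub analyticAt_const
  have hxc : AnalyticAt ℝ (fun p : ℝ × ℝ => ((p.1 - a : ℝ) : ℂ)) z := analyticAt_ofReal' hx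
  have hyc : AnalyticAt ℝ (fun p : ℝ × ℝ => ((-(m : ℝ) * (p.2 - δ) : ℝ) : ℂ)) z :=
    analyticAt_ofReal' (analyticAt_const.mul (analyticAt_snd.sub analyticAt_const))
  have hexp : AnalyticAt ℝ
      (fun p : ℝ × ℝ => Complex.exp (-(Real.pi : ℂ) * ((p.1 - a : ℝ) : ℂ) ^ 2)) z := by
    have hinner : AnalyticAt ℝ (fun p : ℝ × ℝ => -(Real.pi : ℂ) * ((p.1 - a : ℝ) : ℂ) ^ 2) z :=
      analyticAt_const.mul (hxc.pow 2)
    exact ((Complex.differentiable_exp.analyticAt _).restrictScalars).comp hinner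
  have hθ : AnalyticAt ℝ (fun p : ℝ × ℝ =>
      jacobiTheta₂ (((-(m : ℝ) * (p.2 - δ) : ℝ) : ℂ) - Complex.I * ((p.1 - a : ℝ) : ℂ))
        Complex.I) z := by
    have hinner : AnalyticAt ℝ (fun p : ℝ × ℝ =>
        ((-(m : ℝ) * (p.2 - δ) : ℝ) : ℂ) - Complex.I * ((p.1 - a : ℝ) : ℂ)) z :=
      hyc.sub (analyticAt_const.mul hxc)
    exact ((theta_analyticAt _).restrictScalars).comp hinner
  exact hexp.mul hθ

/-- The normalising factor. -/
noncomputable def NR (δ : ℝ) (m : ℤ) (x y : ℝ) : ℝ :=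
  Complex.normSq (G δ m x y) + Complex.normSq (G δ m (x - 1/2) y)

lemma NR_pos (δ : ℝ) (m : ℤ) (x y : ℝ) : 0 < NR δ m x y := by
  have hround := abs_sub_round x
  set k : ℤ := round x with hk
  set d : ℝ := x - k with hd
  have hround' : -(1/2) ≤ d ∧ d ≤ 1/2 := abs_le.mp hround
  rcases le_or_gt |d| (1/4) with hcase | hcase
  · have h1 : G δ m x y ≠ 0 := by
      have h2 : ‖G δ m x y‖ = ‖G δ m d y‖ := by
        rw [show x = d + (k : ℝ) by rw [hd]; ring, G_norm_add_int]
      have h3 : G δ m d y ≠ 0 := G_ne_zero δ m y hcase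
      intro h0
      rw [h0, norm_zero] at h2
      exact h3 (norm_eq_zero.mp h2.symm)
    have := Complex.normSq_pos.2 h1
    have := Complex.normSq_nonneg (G δ m (x - 1/2) y)
    rw [NR]; linarith
  · have h1 : G δ m (x - 1/2) y ≠ 0 := by
      rcases le_or_gt 0 d with hsgn | hsgn
      · have habs : |d - 1/2| ≤ 1/4 := by
          rw [_root_.abs_of_nonneg hsgn] at hcase
          rw [abs_le]; constructor <;> linarith
        have h2 : ‖G δ m (x - 1/2) y‖ = ‖G δ m (d - 1/2) y‖ := by
          rw [show x - 1/2 = (d - 1/2) + (k : ℝ) by rw [hd]; ring, G_norm_add_int]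
        have h3 : G δ m (d - 1/2) y ≠ 0 := G_ne_zero δ m y habs
        intro h0
        rw [h0, norm_zero] at h2
        exact h3 (norm_eq_zero.mp h2.symm)
      · have habs : |d + 1/2| ≤ 1/4 := by
          rw [_root_.abs_of_neg hsgn] at hcase
          rw [abs_le]; constructor <;> linarith
        have h2 : ‖G δ m (x - 1/2) y‖ = ‖G δ m (d + 1/2) y‖ := by
          rw [show x - 1/2 = (d + 1/2) + ((k - 1 : ℤ) : ℝ) by rw [hd]; push_cast; ring,
            G_norm_add_int]
        have h3 : G δ m (d + 1/2) y ≠ 0 := G_ne_zero δ m y habs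
        intro h0
        rw [h0, norm_zero] at h2
        exact h3 (norm_eq_zero.mp h2.symm)
    have := Complex.normSq_pos.2 h1
    have := Complex.normSq_nonneg (G δ m x y)
    rw [NR]; linarith

lemma NR_add_one (δ : ℝ) (m : ℤ) (x y : ℝ) : NR δ m (x + 1) y = NR δ m x y := by
  rw [NR, NR, Complex.normSq_eq_norm_sq, Complex.normSq_eq_norm_sq, Complex.normSq_eq_norm_sq,
    Complex.normSq_eq_norm_sq,
    G_norm_add_one, show x + 1 - 1/2 = (x - 1/2) + 1 by ring, G_norm_add_one]

lemma NR_per_y (δ : ℝ) (m : ℤ) (x y : ℝ) : NR δ m x (y + 1) = NR δ m x y := by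
  rw [NR, NR, G_periodic, G_periodic]

/-- The normalised theta frame element with offset `a`. -/
noncomputable def ff (δ : ℝ) (m : ℤ) (a x y : ℝ) : ℂ :=
  G δ m (x - a) y * Complex.exp (-(Complex.log ((NR δ m x y : ℝ) : ℂ)) / 2)

lemma ff_twisted (δ : ℝ) (m : ℤ) (a x y : ℝ) :
    ff δ m a (x + 1) y = e (-(m : ℝ) * (y - δ)) * ff δ m a x y := by
  rw [ff, ff, NR_add_one, show x + 1 - a = (x - a) + 1 by ring, G_twisted]
  ring

lemma ff_per_y (δ : ℝ) (m : ℤ) (a x y : ℝ) :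
    ff δ m a x (y + 1) = ff δ m a x y := by
  rw [ff, ff, NR_per_y, G_periodic]

lemma ff_scale_eq (δ : ℝ) (m : ℤ) (x y : ℝ) :
    Complex.exp (-(Complex.log ((NR δ m x y : ℝ) : ℂ)) / 2)
      = ((Real.exp (-(Real.log (NR δ m x y)) / 2) : ℝ) : ℂ) := by
  rw [← Complex.ofReal_log (NR_pos δ m x y).le, Complex.ofReal_exp]
  push_cast
  ring_nf

lemma ff_normSq_add (δ : ℝ) (m : ℤ) (x y : ℝ) :
    ‖ff δ m 0 x y‖ ^ 2 + ‖ff δ m (1/2) x y‖ ^ 2 = 1 := by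
  have hpos := NR_pos δ m x y
  have hscale : ‖Complex.exp (-(Complex.log ((NR δ m x y : ℝ) : ℂ)) / 2)‖ ^ 2
      = (NR δ m x y)⁻¹ := by
    rw [ff_scale_eq, Complex.norm_of_nonneg (Real.exp_pos _).le,
      ← Real.exp_nat_mul]
    rw [show ((2 : ℕ) : ℝ) * (-(Real.log (NR δ m x y)) / 2) = -Real.log (NR δ m x y) by
      push_cast; ring]
    rw [Real.exp_neg, Real.exp_log hpos]
  rw [ff, ff, norm_mul, norm_mul, mul_pow, mul_pow, hscale, sub_zero]
  rw [← Complex.normSq_eq_norm_sq, ← Complex.normSq_eq_norm_sq]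
  rw [← add_mul]
  rw [show Complex.normSq (G δ m x y) + Complex.normSq (G δ m (x - 1/2) y) = NR δ m x y from rfl]
  field_simp

lemma ff_analyticAt (δ : ℝ) (m : ℤ) (a : ℝ) (z : ℝ × ℝ) :
    AnalyticAt ℝ (fun p : ℝ × ℝ => ff δ m a p.1 p.2) z := by
  have hNC : AnalyticAt ℝ (fun p : ℝ × ℝ => ((NR δ m p.1 p.2 : ℝ) : ℂ)) z := by
    have h1 : (fun p : ℝ × ℝ => ((NR δ m p.1 p.2 : ℝ) : ℂ))
        = fun p : ℝ × ℝ => G δ m (p.1 - 0) p.2 * (starRingEnd ℂ) (G δ m (p.1 - 0) p.2)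
          + G δ m (p.1 - 1/2) p.2 * (starRingEnd ℂ) (G δ m (p.1 - 1/2) p.2) := by
      funext p
      rw [Complex.mul_conj, Complex.mul_conj, NR, sub_zero]
      push_cast
      ring
    rw [h1]
    exact ((G_shift_analyticAt δ m 0 z).mul (analyticAt_conj' (G_shift_analyticAt δ m 0 z))).add
      ((G_shift_analyticAt δ m (1/2) z).mul (analyticAt_conj' (G_shift_analyticAt δ m (1/2) z)))
  have hmem : ((NR δ m z.1 z.2 : ℝ) : ℂ) ∈ Complex.slitPlane :=
    Complex.ofReal_mem_slitPlane.2 (NR_pos δ m z.1 z.2)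
  have hlog : AnalyticAt ℝ (fun p : ℝ × ℝ => Complex.log ((NR δ m p.1 p.2 : ℝ) : ℂ)) z :=
    AnalyticAt.comp (g := Complex.log)
      (f := fun p : ℝ × ℝ => ((NR δ m p.1 p.2 : ℝ) : ℂ))
      ((analyticAt_clog hmem).restrictScalars) hNC
  have hscale : AnalyticAt ℝ
      (fun p : ℝ × ℝ => Complex.exp (-(Complex.log ((NR δ m p.1 p.2 : ℝ) : ℂ)) / 2)) z := by
    have hinner : AnalyticAt ℝ
        (fun p : ℝ × ℝ => -(Complex.log ((NR δ m p.1 p.2 : ℝ) : ℂ)) / 2) z :=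
      hlog.neg.div analyticAt_const (by norm_num)
    exact ((Complex.differentiable_exp.analyticAt _).restrictScalars).comp hinner
  exact (G_shift_analyticAt δ m a z).mul hscale

lemma ff_contDiff (δ : ℝ) (m : ℤ) (a : ℝ) :
    ContDiff ℝ (⊤ : ℕ∞) (fun p : ℝ × ℝ => ff δ m a p.1 p.2) := by
  apply AnalyticOnNhd.contDiff
  intro z _
  exact ff_analyticAt δ m a z

lemma conj_mul_add_one {z w : ℂ}
    (h : ‖z‖ ^ 2 + ‖w‖ ^ 2 = 1) :
    (starRingEnd ℂ) z * z + (starRingEnd ℂ) w * w = 1 := by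
  rw [mul_comm, Complex.mul_conj, mul_comm, Complex.mul_conj,
    Complex.normSq_eq_norm_sq, Complex.normSq_eq_norm_sq]
  exact_mod_cast h

lemma mul_conj_add_one {z w : ℂ}
    (h : ‖z‖ ^ 2 + ‖w‖ ^ 2 = 1) :
    z * (starRingEnd ℂ) z + w * (starRingEnd ℂ) w = 1 := by
  rw [Complex.mul_conj, Complex.mul_conj, Complex.normSq_eq_norm_sq, Complex.normSq_eq_norm_sq]
  exact_mod_cast h

lemma qprod_star_self (μ ν : ℝ) (n : ℤ) (f : ℝ → ℝ → ℂ) (p : ℤ) (x y : ℝ) :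
    qprod μ ν (qstar μ ν (diracAt n f)) (diracAt n f) p x y
      = if p = 0 then
          (starRingEnd ℂ) (f (x + 2 * (n : ℝ) * μ) (y + 2 * (n : ℝ) * ν))
            * f (x + 2 * (n : ℝ) * μ) (y + 2 * (n : ℝ) * ν)
        else 0 := by
  rw [qprod]
  have hsingle : ∀ q : ℤ, q ≠ -n →
      qstar μ ν (diracAt n f) q x y
        * diracAt n f (p - q) (x - 2 * (q : ℝ) * μ) (y - 2 * (q : ℝ) * ν) = 0 := by
    intro q hq
    have h1 : ¬(-q = n) := by omega
    simp [qstar, diracAt, h1]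
  rw [finsum_eq_single _ (-n) hsingle]
  have hx : x - 2 * ((-n : ℤ) : ℝ) * μ = x + 2 * (n : ℝ) * μ := by push_cast; ring
  have hy : y - 2 * ((-n : ℤ) : ℝ) * ν = y + 2 * (n : ℝ) * ν := by push_cast; ring
  rw [qstar, hx, hy]
  simp only [diracAt, neg_neg, if_pos rfl]
  rcases eq_or_ne p 0 with rfl | hp
  · rw [if_pos rfl, if_pos (by omega : (0 : ℤ) - -n = n)]
    simp
  · rw [if_neg hp, if_neg (by omega : ¬(p - -n = n)), mul_zero]

lemma qprod_self_star (μ ν : ℝ) (n : ℤ) (f : ℝ → ℝ → ℂ) (p : ℤ) (x y : ℝ) :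
    qprod μ ν (diracAt n f) (qstar μ ν (diracAt n f)) p x y
      = if p = 0 then f x y * (starRingEnd ℂ) (f x y) else 0 := by
  rw [qprod]
  have hsingle : ∀ q : ℤ, q ≠ n →
      diracAt n f q x y
        * qstar μ ν (diracAt n f) (p - q) (x - 2 * (q : ℝ) * μ) (y - 2 * (q : ℝ) * ν) = 0 := by
    intro q hq
    simp [diracAt, hq]
  rw [finsum_eq_single _ n hsingle]
  simp only [diracAt, if_pos rfl, qstar]
  rcases eq_or_ne p 0 with rfl | hp
  · rw [if_pos rfl]
    have h1 : -((0 : ℤ) - n) = n := by omega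
    rw [h1, if_pos rfl]
    have hx : x - 2 * (n : ℝ) * μ - 2 * (((0 : ℤ) - n : ℤ) : ℝ) * μ = x := by push_cast; ring
    have hy : y - 2 * (n : ℝ) * ν - 2 * (((0 : ℤ) - n : ℤ) : ℝ) * ν = y := by push_cast; ring
    rw [hx, hy]
    simp
  · rw [if_neg hp, if_neg (by omega : ¬(-(p - n) = n)), map_zero, mul_zero]

/-- For every `n ∈ ℤ` there is a frame of two elements in the degree-`n` part of the
QHM algebra, built from smooth twisted-periodic functions `f₁, f₂` with
`|f₁|² + |f₂|² = 1`. -/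
theorem stmt6 (μ ν : ℝ) (c : ℕ) (hc : 0 < c) (n : ℤ) :
    ∃ f₁ f₂ : ℝ → ℝ → ℂ,
      ContDiff ℝ (⊤ : ℕ∞) (fun xy : ℝ × ℝ => f₁ xy.1 xy.2) ∧
      ContDiff ℝ (⊤ : ℕ∞) (fun xy : ℝ × ℝ => f₂ xy.1 xy.2) ∧
      (∀ x y : ℝ, f₁ x (y + 1) = f₁ x y) ∧
      (∀ x y : ℝ, f₂ x (y + 1) = f₂ x y) ∧
      (∀ x y : ℝ, f₁ (x + 1) y = e (-((c : ℝ) * (n : ℝ) * (y - (n : ℝ) * ν))) * f₁ x y) ∧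
      (∀ x y : ℝ, f₂ (x + 1) y = e (-((c : ℝ) * (n : ℝ) * (y - (n : ℝ) * ν))) * f₂ x y) ∧
      (∀ x y : ℝ, ‖f₁ x y‖ ^ 2 + ‖f₂ x y‖ ^ 2 = 1) ∧
      MemD0 c ν (diracAt n f₁) ∧ MemD0 c ν (diracAt n f₂) ∧
      (∀ (p : ℤ) (x y : ℝ),
        qprod μ ν (qstar μ ν (diracAt n f₁)) (diracAt n f₁) p x y
          + qprod μ ν (qstar μ ν (diracAt n f₂)) (diracAt n f₂) p x y = oneD p x y) ∧
      (∀ (p : ℤ) (x y : ℝ),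
        qprod μ ν (diracAt n f₁) (qstar μ ν (diracAt n f₁)) p x y
          + qprod μ ν (diracAt n f₂) (qstar μ ν (diracAt n f₂)) p x y = oneD p x y) := by

  set δ : ℝ := (n : ℝ) * ν with hδ
  set m : ℤ := (c : ℤ) * n with hm
  set f₁ : ℝ → ℝ → ℂ := fun x y => ff δ m 0 x y with hf₁
  set f₂ : ℝ → ℝ → ℂ := fun x y => ff δ m (1/2) x y with hf₂
  have harg : ∀ y : ℝ, -((m : ℤ) : ℝ) * (y - δ) = -((c : ℝ) * (n : ℝ) * (y - (n : ℝ) * ν)) := by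
    intro y; rw [hm, hδ]; push_cast; ring
  have htw₁ : ∀ x y : ℝ, f₁ (x + 1) y
      = e (-((c : ℝ) * (n : ℝ) * (y - (n : ℝ) * ν))) * f₁ x y := by
    intro x y
    rw [hf₁]
    simp only []
    rw [ff_twisted, harg]
  have htw₂ : ∀ x y : ℝ, f₂ (x + 1) y
      = e (-((c : ℝ) * (n : ℝ) * (y - (n : ℝ) * ν))) * f₂ x y := by
    intro x y
    rw [hf₂]
    simp only []
    rw [ff_twisted, harg]
  have hnorm : ∀ x y : ℝ, ‖f₁ x y‖ ^ 2 + ‖f₂ x y‖ ^ 2 = 1 :=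
    fun x y => ff_normSq_add δ m x y
  have hbound : ∀ (f : ℝ → ℝ → ℂ), (∀ x y, ‖f x y‖ ^ 2 ≤ 1) →
      ∀ (p : ℤ) (x y : ℝ), ‖diracAt n f p x y‖ ≤ 1 := by
    intro f hf p x y
    rcases eq_or_ne p n with rfl | hp
    · simp only [diracAt, if_pos rfl, if_true, ite_true]
      nlinarith [hf x y, norm_nonneg (f x y)]
    · simp [diracAt, hp]
  have hmem : ∀ (f : ℝ → ℝ → ℂ),
      ContDiff ℝ (⊤ : ℕ∞) (fun xy : ℝ × ℝ => f xy.1 xy.2) →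
      (∀ x y, f x (y + 1) = f x y) →
      (∀ x y, f (x + 1) y = e (-((c : ℝ) * (n : ℝ) * (y - (n : ℝ) * ν))) * f x y) →
      (∀ x y, ‖f x y‖ ^ 2 ≤ 1) →
      MemD0 c ν (diracAt n f) := by
    intro f hcd hper htw hb
    constructor
    · intro p
      rcases eq_or_ne p n with rfl | hp
      · simp only [diracAt, if_pos rfl, if_true, ite_true]
        exact hcd.continuous
      · simp only [diracAt, if_neg hp]
        exact continuous_const
    · intro p
      exact ⟨1, fun x y => hbound f hb p x y⟩
    · intro p x y
      rcases eq_or_ne p n with rfl | hp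
      · simp only [diracAt, if_pos rfl, if_true, ite_true]; exact hper x y
      · simp [diracAt, hp]
    · apply Set.Finite.subset (Set.finite_singleton n)
      intro p hp
      simp only [Function.mem_support] at hp
      by_contra hpn
      simp only [Set.mem_singleton_iff] at hpn
      apply hp
      funext x y
      simp [diracAt, hpn]
    · intro p x y
      rcases eq_or_ne p n with rfl | hp
      · simp only [diracAt, if_pos rfl, if_true, ite_true]; exact htw x y
      · simp [diracAt, hp]
  have hb₁ : ∀ x y, ‖f₁ x y‖ ^ 2 ≤ 1 := by
    intro x y
    nlinarith [hnorm x y, sq_nonneg (‖f₂ x y‖)]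
  have hb₂ : ∀ x y, ‖f₂ x y‖ ^ 2 ≤ 1 := by
    intro x y
    nlinarith [hnorm x y, sq_nonneg (‖f₁ x y‖)]
  refine ⟨f₁, f₂, ff_contDiff δ m 0, ff_contDiff δ m (1/2),
    fun x y => ff_per_y δ m 0 x y, fun x y => ff_per_y δ m (1/2) x y,
    htw₁, htw₂, hnorm,
    hmem f₁ (ff_contDiff δ m 0) (fun x y => ff_per_y δ m 0 x y) htw₁ hb₁,
    hmem f₂ (ff_contDiff δ m (1/2)) (fun x y => ff_per_y δ m (1/2) x y) htw₂ hb₂,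
    ?_, ?_⟩
  · intro p x y
    rw [qprod_star_self, qprod_star_self, oneD]
    rcases eq_or_ne p 0 with rfl | hp
    · rw [if_pos rfl, if_pos rfl, if_pos rfl]
      exact conj_mul_add_one (hnorm _ _)
    · rw [if_neg hp, if_neg hp, if_neg hp, add_zero]
  · intro p x y
    rw [qprod_self_star, qprod_self_star, oneD]
    rcases eq_or_ne p 0 with rfl | hp
    · rw [if_pos rfl, if_pos rfl, if_pos rfl]
      exact mul_conj_add_one (hnorm _ _)
    · rw [if_neg hp, if_neg hp, if_neg hp, add_zero]
end

section
/- A pair of homomorphisms whose difference maps a generating set into a subalgebra is a quasihomomorphism: let Â be a topological ℂ-algebra and A a topological ℂ-algebra with jointly continuous multiplications, let α, ᾱ : A → Â be continuous algebra homomorphisms, and let B ⊆ Â be a closed (non-unital) subalgebra. Let X ⊆ A be a subset such that the topological closure of the non-unital subalgebra of A generated by X equals A. If for every x ∈ X one has α(x) − ᾱ(x) ∈ B, α(x)·B ⊆ B and B·α(x) ⊆ B, then for every a ∈ A one has α(a) − ᾱ(a) ∈ B, α(a)·B ⊆ B and B·α(a) ⊆ B; that is, (α,ᾱ) is a quasihomomorphism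 from A to B relative to Â. -/
/-!
The elements `a` of `A` for which `α a - β a ∈ B` and `α a` multiplies `B` into itself on both
sides form a non-unital subalgebra: for products this rests on the identity
`x x' - y y' = x (x' - y') + (x - y) x' - (x - y)(x' - y')`, whose three terms lie in `B`.
By continuity of `α`, `β` and of multiplication, and closedness of `B`, this subalgebra is closed.
It contains `X`, hence the closure of the subalgebra generated by `X`, which is all of `A`.
-/

namespace NonUnitalSubalgebra

section Idealizer

variable {R C : Type*} [CommSemiring R] [NonUnitalSemiring C] [Module R C]
  [IsScalarTower R C C] [SMulCommClass R C C]

def idealizer (B : NonUnitalSubalgebra R C) : NonUnitalSubalgebra R C where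
  carrier := {c | ∀ b ∈ B, c * b ∈ B ∧ b * c ∈ B}
  zero_mem' b _ := by simpa only [zero_mul, mul_zero, and_self] using zero_mem _
  add_mem' {c c'} hc hc' b hb := by
    rw [add_mul, mul_add]
    exact ⟨add_mem (hc b hb).1 (hc' b hb).1, add_mem (hc b hb).2 (hc' b hb).2⟩
  smul_mem' r c hc b hb := by
    rw [smul_mul_assoc, mul_smul_comm]
    exact ⟨SMulMemClass.smul_mem r (hc b hb).1, SMulMemClass.smul_mem r (hc b hb).2⟩
  mul_mem' {c c'} hc hc' b hb := by
    rw [mul_assoc c, ← mul_assoc b]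
    exact ⟨(hc _ (hc' b hb).1).1, (hc' _ (hc b hb).2).2⟩

variable {B : NonUnitalSubalgebra R C}

theorem mem_idealizer {c : C} : c ∈ B.idealizer ↔ ∀ b ∈ B, c * b ∈ B ∧ b * c ∈ B :=
  Iff.rfl

theorem isClosed_idealizer [TopologicalSpace C] [ContinuousMul C] (hB : IsClosed (B : Set C)) :
    IsClosed (B.idealizer : Set C) := by
  have : (B.idealizer : Set C) = ⋂ b ∈ B, ((· * b) ⁻¹' B ∩ (b * ·) ⁻¹' B) := by
    ext c
    simp [mem_idealizer]
  rw [this]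
  exact isClosed_biInter fun b _ ↦
    (hB.preimage (continuous_mul_const b)).inter (hB.preimage (continuous_const_mul b))

end Idealizer

section QuasihomDomain

variable {R A C : Type*} [CommRing R] [NonUnitalNonAssocSemiring A] [Module R A]
  [NonUnitalRing C] [Module R C] [IsScalarTower R C C] [SMulCommClass R C C]
  {B : NonUnitalSubalgebra R C}

theorem mul_sub_mul_mem {x y x' y' : C} (hx : x ∈ B.idealizer) (hx' : x' ∈ B.idealizer)
    (hxy : x - y ∈ B) (hxy' : x' - y' ∈ B) : x * x' - y * y' ∈ B := by
  have key : x * x' - y * y' = x * (x' - y') + ((x - y) * x' - (x - y) * (x' - y')) := by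
    noncomm_ring
  rw [key]
  exact add_mem ((hx _ hxy').1) (sub_mem ((hx' _ hxy).2) (mul_mem hxy hxy'))

/-- The elements on which the pair `(α, β)` satisfies the conditions of a quasihomomorphism
relative to `B`. -/
def quasihomDomain (α β : A →ₙₐ[R] C) (B : NonUnitalSubalgebra R C) :
    NonUnitalSubalgebra R A where
  carrier := {a | α a - β a ∈ B ∧ α a ∈ B.idealizer}
  zero_mem' := by simpa only [Set.mem_ofPred_eq, map_zero, sub_zero] using ⟨zero_mem _, zero_mem _⟩
  add_mem' {a a'} ha ha' := by
    simp only [Set.mem_ofPred_eq, map_add, add_sub_add_comm]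
    exact ⟨add_mem ha.1 ha'.1, add_mem ha.2 ha'.2⟩
  smul_mem' r a ha := by
    simp only [Set.mem_ofPred_eq, map_smul, ← smul_sub]
    exact ⟨SMulMemClass.smul_mem r ha.1, SMulMemClass.smul_mem r ha.2⟩
  mul_mem' {a a'} ha ha' := by
    simp only [Set.mem_ofPred_eq, map_mul]
    exact ⟨mul_sub_mul_mem ha.2 ha'.2 ha.1 ha'.1, mul_mem ha.2 ha'.2⟩

theorem isClosed_quasihomDomain [TopologicalSpace A] [TopologicalSpace C] [ContinuousSub C]
    [ContinuousMul C] {α β : A →ₙₐ[R] C} (hα : Continuous α) (hβ : Continuous β)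
    (hB : IsClosed (B : Set C)) : IsClosed (quasihomDomain α β B : Set A) :=
  (hB.preimage (hα.sub hβ)).inter ((isClosed_idealizer hB).preimage hα)

end QuasihomDomain

end NonUnitalSubalgebra

open NonUnitalSubalgebra in
theorem stmt8_general {A Bhat : Type*}
    [NonUnitalRing A] [Module ℂ A] [IsScalarTower ℂ A A] [SMulCommClass ℂ A A]
    [TopologicalSpace A]
    [NonUnitalRing Bhat] [Module ℂ Bhat] [IsScalarTower ℂ Bhat Bhat]
    [SMulCommClass ℂ Bhat Bhat] [TopologicalSpace Bhat] [IsTopologicalRing Bhat]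
    (α β : A →ₙₐ[ℂ] Bhat) (hα : Continuous α) (hβ : Continuous β)
    (B : NonUnitalSubalgebra ℂ Bhat) (hB : IsClosed (B : Set Bhat))
    (X : Set A)
    (hX : closure (NonUnitalAlgebra.adjoin ℂ X : Set A) = Set.univ)
    (hdiff : ∀ x ∈ X, α x - β x ∈ B)
    (hleft : ∀ x ∈ X, ∀ b ∈ B, α x * b ∈ B)
    (hright : ∀ x ∈ X, ∀ b ∈ B, b * α x ∈ B) :
    (∀ a : A, α a - β a ∈ B)
    ∧ (∀ a : A, ∀ b ∈ B, α a * b ∈ B)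
    ∧ (∀ a : A, ∀ b ∈ B, b * α a ∈ B) := by
  have hX_sub : X ⊆ quasihomDomain α β B := fun x hx ↦
    ⟨hdiff x hx, fun b hb ↦ ⟨hleft x hx b hb, hright x hx b hb⟩⟩
  have hall (a : A) : a ∈ quasihomDomain α β B := by
    have ha : a ∈ closure (NonUnitalAlgebra.adjoin ℂ X : Set A) := hX ▸ Set.mem_univ a
    exact closure_minimal (NonUnitalAlgebra.adjoin_le hX_sub) (isClosed_quasihomDomain hα hβ hB) ha
  exact ⟨fun a ↦ (hall a).1, fun a b hb ↦ ((hall a).2 b hb).1, fun a b hb ↦ ((hall a).2 b hb).2⟩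

/-- A pair of continuous homomorphisms whose difference maps a generating set into a
closed subalgebra `B` (which is moreover stable under multiplication by the images of
the generating set) is a quasihomomorphism: the same three conditions hold for every
element of `A`. -/
theorem stmt8 {A Bhat : Type*}
    [NonUnitalRing A] [Module ℂ A] [IsScalarTower ℂ A A] [SMulCommClass ℂ A A]
    [TopologicalSpace A] [IsTopologicalRing A]
    [NonUnitalRing Bhat] [Module ℂ Bhat] [IsScalarTower ℂ Bhat Bhat]
    [SMulCommClass ℂ Bhat Bhat] [TopologicalSpace Bhat] [IsTopologicalRing Bhat]
    (α β : A →ₙₐ[ℂ] Bhat) (hα : Continuous α) (hβ : Continuous β)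
    (B : NonUnitalSubalgebra ℂ Bhat) (hB : IsClosed (B : Set Bhat))
    (X : Set A)
    (hX : closure (NonUnitalAlgebra.adjoin ℂ X : Set A) = Set.univ)
    (hdiff : ∀ x ∈ X, α x - β x ∈ B)
    (hleft : ∀ x ∈ X, ∀ b ∈ B, α x * b ∈ B)
    (hright : ∀ x ∈ X, ∀ b ∈ B, b * α x ∈ B) :
    (∀ a : A, α a - β a ∈ B)
    ∧ (∀ a : A, ∀ b ∈ B, α a * b ∈ B)
    ∧ (∀ a : A, ∀ b ∈ B, b * α a ∈ B) :=
  stmt8_general α β hα hβ B hB X hX hdiff hleft hright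
end

section
/- The rapidly decreasing matrices form an algebra with submultiplicative-type seminorm estimates: if a, b : ℕ × ℕ → ℂ are rapidly decreasing matrices, then for all i, j ∈ ℕ the series Σ_{k=0}^∞ a(i,k)·b(k,j) converges absolutely, the product matrix (ab)(i,j) = Σ_{k=0}^∞ a(i,k)·b(k,j) is rapidly decreasing, and for all m, n ∈ ℕ one has ‖ab‖_{m,n} ≤ ‖a‖_{m,0}·‖b‖_{0,n}, where ‖a‖_{m,n} = Σ_{i,j} (1+i)^m (1+j)^n |a(i,j)| (these sums are finite for rapidly decreasing matrices). -/
/-- A matrix `a : ℕ × ℕ → ℂ` is rapidly decreasing (a smooth compact operator) if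
`sup_{i,j} (1+i)^m (1+j)^n |a(i,j)| < ∞` for all `m, n`. -/
def RapidDecay (a : ℕ → ℕ → ℂ) : Prop :=
  ∀ m n : ℕ, ∃ C : ℝ, ∀ i j : ℕ,
    (1 + (i : ℝ)) ^ m * (1 + (j : ℝ)) ^ n * ‖a i j‖ ≤ C

/-- The seminorm `‖a‖_{m,n} = Σ_{i,j} (1+i)^m (1+j)^n |a(i,j)|`. -/
noncomputable def mnorm (m n : ℕ) (a : ℕ → ℕ → ℂ) : ℝ :=
  ∑' p : ℕ × ℕ, (1 + (p.1 : ℝ)) ^ m * (1 + (p.2 : ℝ)) ^ n * ‖a p.1 p.2‖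

/-!
The weights `(1+i)^m` and `(1+j)^n` sit on the outer indices of `ab`, so everything follows from
one estimate for arbitrary nonnegative weights `u, v`:
`Σ_{i,j} u_i v_j |Σ_k a_ik b_kj| ≤ Σ_{i,k} u_i |a_ik| · sup_k Σ_j v_j |b_kj| ≤ ‖u a‖₁ ‖v b‖₁`.
It is proved in `ℝ≥0∞`, where sums can be exchanged without any summability bookkeeping, and its
finiteness then gives summability of the weighted entries of `ab`. Rapid decay is equivalent to
summability of all weighted entries, since raising both exponents by `2` gains the summable factor
`(1+i)⁻² (1+j)⁻²`.
-/

open scoped ENNReal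

lemma ENNReal.tsum_tsum_tsum_mul_le {ι κ μ : Type*} (A : ι → κ → ℝ≥0∞) (B : κ → μ → ℝ≥0∞) :
    ∑' i, ∑' j, ∑' k, A i k * B k j ≤ (∑' i, ∑' k, A i k) * ∑' k, ∑' j, B k j :=
  calc ∑' i, ∑' j, ∑' k, A i k * B k j
      = ∑' i, ∑' k, A i k * ∑' j, B k j := by
        simp_rw [ENNReal.tsum_comm (α := μ), ENNReal.tsum_mul_left]
    _ ≤ ∑' i, ∑' k, A i k * ∑' k', ∑' j, B k' j := by
        gcongr with i k
        exact ENNReal.le_tsum (f := fun k' => ∑' j, B k' j) k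
    _ = (∑' i, ∑' k, A i k) * ∑' k, ∑' j, B k j := by
        simp_rw [ENNReal.tsum_mul_right]

lemma ENNReal.tsum_mul_enorm_tsum_mul_le {ι κ μ R : Type*} [NormedRing R]
    (U : ι → ℝ≥0∞) (V : μ → ℝ≥0∞) (a : ι → κ → R) (b : κ → μ → R) :
    ∑' i, ∑' j, U i * V j * ‖∑' k, a i k * b k j‖ₑ
      ≤ (∑' i, ∑' k, U i * ‖a i k‖ₑ) * ∑' k, ∑' j, V j * ‖b k j‖ₑ := by
  refine le_trans ?_ (ENNReal.tsum_tsum_tsum_mul_le _ _)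
  gcongr with i j
  calc U i * V j * ‖∑' k, a i k * b k j‖ₑ
      ≤ U i * V j * ∑' k, ‖a i k‖ₑ * ‖b k j‖ₑ := by
        gcongr
        refine enorm_tsum_le_tsum_enorm.trans (ENNReal.tsum_le_tsum fun k => ?_)
        simpa [enorm_eq_nnnorm] using ENNReal.coe_le_coe.2 (nnnorm_mul_le (a i k) (b k j))
    _ = ∑' k, U i * ‖a i k‖ₑ * (V j * ‖b k j‖ₑ) := by
        rw [← ENNReal.tsum_mul_left]
        congr 1 with k
        ring

lemma summable_and_tsum_le_of_tsum_ofReal_le {α : Type*} {f : α → ℝ} (hf : ∀ i, 0 ≤ f i)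
    {c : ℝ} (hc : 0 ≤ c) (h : ∑' i, ENNReal.ofReal (f i) ≤ ENNReal.ofReal c) :
    Summable f ∧ ∑' i, f i ≤ c := by
  have hsum : Summable f := by
    simpa [ENNReal.toReal_ofReal (hf _)] using
      ENNReal.summable_toReal (ne_top_of_le_ne_top ENNReal.ofReal_ne_top h)
  refine ⟨hsum, (ENNReal.ofReal_le_ofReal_iff hc).1 ?_⟩
  rwa [ENNReal.ofReal_tsum_of_nonneg hf hsum]

lemma summable_and_tsum_mul_norm_tsum_mul_le {ι κ μ R : Type*} [NormedRing R]
    {u : ι → ℝ} {v : μ → ℝ} (hu : ∀ i, 0 ≤ u i) (hv : ∀ j, 0 ≤ v j)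
    {a : ι → κ → R} {b : κ → μ → R}
    (ha : Summable fun p : ι × κ => u p.1 * ‖a p.1 p.2‖)
    (hb : Summable fun p : κ × μ => v p.2 * ‖b p.1 p.2‖) :
    Summable (fun p : ι × μ => u p.1 * v p.2 * ‖∑' k, a p.1 k * b k p.2‖) ∧
      ∑' p : ι × μ, u p.1 * v p.2 * ‖∑' k, a p.1 k * b k p.2‖
        ≤ (∑' p : ι × κ, u p.1 * ‖a p.1 p.2‖) * ∑' p : κ × μ, v p.2 * ‖b p.1 p.2‖ := by
  have ha₀ (p : ι × κ) : 0 ≤ u p.1 * ‖a p.1 p.2‖ := mul_nonneg (hu _) (norm_nonneg _)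
  have hb₀ (p : κ × μ) : 0 ≤ v p.2 * ‖b p.1 p.2‖ := mul_nonneg (hv _) (norm_nonneg _)
  refine summable_and_tsum_le_of_tsum_ofReal_le
    (fun p => mul_nonneg (mul_nonneg (hu _) (hv _)) (norm_nonneg _))
    (mul_nonneg (tsum_nonneg ha₀) (tsum_nonneg hb₀)) ?_
  rw [ENNReal.ofReal_mul (tsum_nonneg ha₀), ENNReal.ofReal_tsum_of_nonneg ha₀ ha,
    ENNReal.ofReal_tsum_of_nonneg hb₀ hb]
  simp only [ENNReal.ofReal_mul (hu _), ENNReal.ofReal_mul (hv _),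
    ENNReal.ofReal_mul (mul_nonneg (hu _) (hv _)), ofReal_norm, ENNReal.tsum_prod']
  exact ENNReal.tsum_mul_enorm_tsum_mul_le _ _ a b

lemma summable_inv_one_add_sq : Summable fun k : ℕ => ((1 + (k : ℝ)) ^ 2)⁻¹ := by
  refine ((summable_nat_add_iff 1).2 (Real.summable_nat_pow_inv.2 one_lt_two)).congr fun k => ?_
  push_cast
  ring_nf

lemma RapidDecay.summable_weighted {a : ℕ → ℕ → ℂ} (ha : RapidDecay a) (m n : ℕ) :
    Summable fun p : ℕ × ℕ => (1 + (p.1 : ℝ)) ^ m * (1 + (p.2 : ℝ)) ^ n * ‖a p.1 p.2‖ := by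
  obtain ⟨C, hC⟩ := ha (m + 2) (n + 2)
  refine ((summable_inv_one_add_sq.mul_of_nonneg summable_inv_one_add_sq (fun _ => by positivity)
    (fun _ => by positivity)).mul_left C).of_nonneg_of_le (fun p => by positivity) fun p => ?_
  rw [← mul_inv, ← div_eq_mul_inv, le_div_iff₀ (by positivity)]
  calc (1 + (p.1 : ℝ)) ^ m * (1 + (p.2 : ℝ)) ^ n * ‖a p.1 p.2‖
        * ((1 + (p.1 : ℝ)) ^ 2 * (1 + (p.2 : ℝ)) ^ 2)
      = (1 + (p.1 : ℝ)) ^ (m + 2) * (1 + (p.2 : ℝ)) ^ (n + 2) * ‖a p.1 p.2‖ := by ring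
    _ ≤ C := hC p.1 p.2

theorem rapidDecay_iff_summable {a : ℕ → ℕ → ℂ} :
    RapidDecay a ↔ ∀ m n : ℕ,
      Summable fun p : ℕ × ℕ => (1 + (p.1 : ℝ)) ^ m * (1 + (p.2 : ℝ)) ^ n * ‖a p.1 p.2‖ :=
  ⟨RapidDecay.summable_weighted, fun h m n =>
    ⟨_, fun i j => (h m n).le_tsum (i, j) fun _ _ => by positivity⟩⟩

lemma RapidDecay.summable_norm_mul {a b : ℕ → ℕ → ℂ} (ha : RapidDecay a) (hb : RapidDecay b)
    (i j : ℕ) : Summable fun k : ℕ => ‖a i k * b k j‖ := by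
  obtain ⟨C, hC⟩ := hb 0 0
  have hrow : Summable fun k : ℕ => ‖a i k‖ := by
    simpa using (ha.summable_weighted 0 0).prod_factor i
  refine (hrow.mul_right C).of_nonneg_of_le (fun _ => norm_nonneg _) fun k => ?_
  rw [norm_mul]
  exact mul_le_mul_of_nonneg_left (by simpa using hC k j) (norm_nonneg _)

/-- The rapidly decreasing matrices form an algebra: the series defining the product
converges absolutely, the product is rapidly decreasing, and
`‖ab‖_{m,n} ≤ ‖a‖_{m,0}·‖b‖_{0,n}`. -/
theorem stmt11 (a b : ℕ → ℕ → ℂ) (ha : RapidDecay a) (hb : RapidDecay b) :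
    (∀ i j : ℕ, Summable fun k : ℕ => ‖a i k * b k j‖) ∧
    RapidDecay (fun i j => ∑' k : ℕ, a i k * b k j) ∧
    (∀ m n : ℕ,
      mnorm m n (fun i j => ∑' k : ℕ, a i k * b k j) ≤ mnorm m 0 a * mnorm 0 n b) := by
  have hweighted (m n : ℕ) := summable_and_tsum_mul_norm_tsum_mul_le
    (u := fun i : ℕ => (1 + (i : ℝ)) ^ m) (v := fun j : ℕ => (1 + (j : ℝ)) ^ n)
    (fun _ => by positivity) (fun _ => by positivity)
    (by simpa using ha.summable_weighted m 0) (by simpa using hb.summable_weighted 0 n)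
  refine ⟨ha.summable_norm_mul hb, rapidDecay_iff_summable.2 fun m n => (hweighted m n).1,
    fun m n => ?_⟩
  simpa [mnorm] using (hweighted m n).2
end
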